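/- arXiv:2201.09276 — 3 statements merged into one kernel-verified Lean document; each statement's English description precedes it below -/
import Mathlib

section
/- Let R be a commutative local ring and A ∈ M₂(R). Then A is strongly clean if and only if I₂ − A ∈ GL₂(R) or A is strongly rad-clean. -/
/-- `j` lies in the Jacobson radical of the corner ring `eSe` (with identity `e`):
every element of the form `e - (eye)·j` is invertible in the corner ring. -/
def MemCornerJacobson {S : Type*} [Ring S] (e j : S) : Prop :=
  ∀ y : S, ∃ s : S,
    e * s * e = s ∧ s * (e - e * y * e * j) = e ∧ (e - e * y * e * j) * s = e

/-- `a` is strongly rad-clean: `a = e + u` with `e` idempotent, `u` a unit,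
`ae = ea` and `eae ∈ J(eSe)`. -/
def IsStronglyRadClean {S : Type*} [Ring S] (a : S) : Prop :=
  ∃ e : S, IsIdempotentElem e ∧ IsUnit (a - e) ∧ a * e = e * a ∧
    MemCornerJacobson e (e * a * e)

/-- `a` is strongly clean. -/
def IsStronglyClean {S : Type*} [Ring S] (a : S) : Prop :=
  ∃ e : S, IsIdempotentElem e ∧ IsUnit (a - e) ∧ a * e = e * a

/-!
Over a local ring an idempotent `e ≠ 1` in `M₂(R)` has determinant `0`, and then
`e X e = tr(X e) • e` for every `X`: the corner ring `eM₂(R)e` is `R • e`, a copy of the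
local ring `R`. So if `A = e + u` is a strongly clean decomposition with `e ≠ 1`, either
`eAe` is a unit of the corner — and then `A` itself is a unit, hence strongly rad-clean
with the idempotent `0` — or `eAe` lies in the maximal ideal of the corner, which is its
Jacobson radical.
-/

/-- `x` is invertible in the corner ring `eSe`, whose identity is `e`. -/
def IsCornerUnit {S : Type*} [Ring S] (e x : S) : Prop :=
  ∃ s : S, e * s * e = s ∧ s * x = e ∧ x * s = e

section Ring

variable {S : Type*} [Ring S]

theorem isStronglyRadClean_of_isUnit {a : S} (h : IsUnit a) : IsStronglyRadClean a :=
  ⟨0, .zero, by simpa using h, by simp, fun _ => ⟨0, by simp⟩⟩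

theorem IsStronglyRadClean.isStronglyClean {a : S} (h : IsStronglyRadClean a) :
    IsStronglyClean a :=
  let ⟨e, he, hu, hc, _⟩ := h
  ⟨e, he, hu, hc⟩

theorem isStronglyClean_of_isUnit_one_sub {a : S} (h : IsUnit (1 - a)) : IsStronglyClean a :=
  ⟨1, .one, by simpa using h.neg, by simp⟩

/-- If `e` commutes with `a`, then `a` acts on `eS` through the corner `eae` and on
`(1 - e)S` through the unit `a - e`; so `a` is invertible as soon as `eae` is a corner unit. -/
theorem isUnit_of_isUnit_sub_of_isCornerUnit {a e : S} (he : IsIdempotentElem e)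
    (hc : a * e = e * a) (hu : IsUnit (a - e)) (hae : IsCornerUnit e (e * a * e)) :
    IsUnit a := by
  obtain ⟨s, hs, hsa, has⟩ := hae
  obtain ⟨u, hu⟩ := hu
  have hes : e * s = s := by rw [← hs, ← mul_assoc, ← mul_assoc, he.eq]
  have hse : s * e = s := by rw [← hs, mul_assoc, he.eq]
  have hea : e * a * e = e * a := by rw [← hc, mul_assoc, he.eq]
  have hae' : a * e = e * a * e := by rw [hea, hc]
  have hau : a * (1 - e) = ↑u * (1 - e) := by
    rw [hu, sub_mul, mul_sub e, mul_one, he.eq, sub_self, sub_zero]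
  have hfa : Commute (1 - e) a := (Commute.one_left a).sub_left hc.symm
  have hue : Commute e ↑u := hu ▸ (show Commute e a from hc.symm).sub_right (Commute.refl e)
  have hfu : Commute (1 - e) ↑u⁻¹ := ((Commute.one_left _).sub_left hue).units_inv_right
  refine isUnit_iff_exists.mpr ⟨s + ↑u⁻¹ * (1 - e), ?_, ?_⟩
  · calc a * (s + ↑u⁻¹ * (1 - e))
        = a * e * s + a * (1 - e) * ↑u⁻¹ := by
          rw [mul_add, mul_assoc a e s, hes, ← hfu.eq, mul_assoc]
      _ = e * a * e * s + ↑u * (↑u⁻¹ * (1 - e)) := by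
          rw [hae', hau, mul_assoc (↑u : S) (1 - e), hfu.eq]
      _ = 1 := by rw [has, ← mul_assoc, u.mul_inv, one_mul, add_sub_cancel]
  · calc (s + ↑u⁻¹ * (1 - e)) * a
        = s * (e * a) + ↑u⁻¹ * (a * (1 - e)) := by
          rw [add_mul, mul_assoc _ (1 - e), hfa.eq, ← mul_assoc s e a, hse]
      _ = s * (e * a * e) + ↑u⁻¹ * (↑u * (1 - e)) := by rw [hea, hau]
      _ = 1 := by rw [hsa, ← mul_assoc, u.inv_mul, one_mul, add_sub_cancel]

end Ring

section Algebra

variable {R S : Type*} [CommRing R] [Ring S] [Algebra R S] {e : S}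

theorem IsIdempotentElem.isCornerUnit_smul (he : IsIdempotentElem e) {c : R} (hc : IsUnit c) :
    IsCornerUnit e (c • e) := by
  obtain ⟨c, rfl⟩ := hc
  refine ⟨(↑c⁻¹ : R) • e, ?_, ?_, ?_⟩
  · rw [mul_smul_comm, smul_mul_assoc, he.eq, he.eq]
  · rw [smul_mul_smul_comm, he.eq, c.inv_mul, one_smul]
  · rw [smul_mul_smul_comm, he.eq, c.mul_inv, one_smul]

/-- A corner `eSe = R • e` with `R` local is itself local, with radical `𝔪 • e`. -/
theorem IsIdempotentElem.memCornerJacobson_smul [IsLocalRing R] (he : IsIdempotentElem e)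
    (hcorner : ∀ y : S, ∃ μ : R, e * y * e = μ • e) {c : R} (hc : ¬IsUnit c) :
    MemCornerJacobson e (c • e) := by
  intro y
  obtain ⟨μ, hμ⟩ := hcorner y
  have hunit : IsUnit (1 - μ * c) :=
    IsLocalRing.isUnit_one_sub_self_of_mem_nonunits _ fun h => hc (isUnit_of_mul_isUnit_right h)
  have hsub : e - e * y * e * (c • e) = (1 - μ * c) • e := by
    rw [hμ, smul_mul_smul_comm, he.eq, sub_smul, one_smul]
  rw [hsub]
  exact he.isCornerUnit_smul hunit

end Algebra

theorem IsLocalRing.eq_zero_or_eq_one_of_isIdempotentElem {R : Type*} [CommRing R]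
    [IsLocalRing R] {a : R} (ha : IsIdempotentElem a) : a = 0 ∨ a = 1 := by
  refine (isUnit_or_isUnit_one_sub_self a).symm.imp (fun h => ?_) fun h => ?_
  · exact h.mul_left_cancel (by rw [mul_zero, sub_mul, one_mul, ha.eq, sub_self])
  · exact h.mul_left_cancel (by rw [ha.eq, mul_one])

namespace Matrix

variable {R : Type*} [CommRing R]

theorem det_eq_zero_of_isIdempotentElem_of_ne_one [IsLocalRing R] {n : Type*} [Fintype n]
    [DecidableEq n] {e : Matrix n n R} (he : IsIdempotentElem e) (h1 : e ≠ 1) : e.det = 0 := by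
  refine (IsLocalRing.eq_zero_or_eq_one_of_isIdempotentElem ?_).resolve_right fun hdet => h1 ?_
  · rw [IsIdempotentElem, ← det_mul, he.eq]
  · exact (IsIdempotentElem.iff_eq_one_of_isUnit ((isUnit_iff_isUnit_det e).mpr
      (hdet ▸ isUnit_one))).mp he

/-- A rank-one `2 × 2` matrix `e = v wᵀ` satisfies `e X e = (wᵀ X v) • e = tr(X e) • e`. -/
theorem mul_mul_eq_trace_smul_of_det_eq_zero {e : Matrix (Fin 2) (Fin 2) R} (h : e.det = 0)
    (X : Matrix (Fin 2) (Fin 2) R) : e * X * e = (X * e).trace • e := by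
  rw [det_fin_two] at h
  ext i j
  fin_cases i <;> fin_cases j <;>
    simp only [Fin.zero_eta, Fin.mk_one, Fin.isValue, mul_apply, Fin.sum_univ_two,
      trace_fin_two, smul_apply, smul_eq_mul]
  · linear_combination (-X 1 1) * h
  · linear_combination (X 0 1) * h
  · linear_combination (X 1 0) * h
  · linear_combination (-X 0 0) * h

end Matrix

theorem stmt6 {R : Type*} [CommRing R] [IsLocalRing R] (A : Matrix (Fin 2) (Fin 2) R) :
    IsStronglyClean A ↔ IsUnit (1 - A) ∨ IsStronglyRadClean A := by
  refine ⟨fun ⟨e, he, hu, hc⟩ => ?_, fun h => h.elim isStronglyClean_of_isUnit_one_sub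
    IsStronglyRadClean.isStronglyClean⟩
  by_cases h1 : e = 1
  · subst h1
    exact .inl (by simpa using hu.neg)
  have hcorner := Matrix.mul_mul_eq_trace_smul_of_det_eq_zero
    (Matrix.det_eq_zero_of_isIdempotentElem_of_ne_one he h1)
  right
  by_cases hτ : IsUnit (A * e).trace
  · refine isStronglyRadClean_of_isUnit (isUnit_of_isUnit_sub_of_isCornerUnit he hc hu ?_)
    rw [hcorner]
    exact he.isCornerUnit_smul hτ
  · refine ⟨e, he, hu, hc, ?_⟩
    rw [hcorner]
    exact he.memCornerJacobson_smul (fun y => ⟨_, hcorner y⟩) hτ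
end

section
/- Let R be a commutative local ring and A = [[1,1],[1,0]] ∈ M₂(R). Then A is strongly rad-clean but not strongly J-clean. -/
/-- `x` lies in the Jacobson radical of the (possibly noncommutative) ring `S`. -/
def MemJacobson {S : Type*} [Ring S] (x : S) : Prop := ∀ y : S, IsUnit (1 - y * x)

/-- `a` is strongly J-clean. -/
def IsStronglyJClean {S : Type*} [Ring S] (a : S) : Prop :=
  ∃ e : S, IsIdempotentElem e ∧ a * e = e * a ∧ MemJacobson (a - e)

/-! The matrix `A` satisfies `A² - A = 1`. Such an element is a unit, hence strongly rad-clean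
with the idempotent `0`. On the other hand, if `e` is an idempotent commuting with `a`, then
`(a + e - 1)(a - e) = a² - a`, so `a - e ∈ J` would force the unit `a² - a` into the Jacobson
radical, which contains no unit of a nontrivial ring. -/

section

variable {S : Type*} [Ring S]

theorem IsUnit.isStronglyRadClean {a : S} (ha : IsUnit a) : IsStronglyRadClean a :=
  ⟨0, IsIdempotentElem.zero, by rwa [sub_zero], by rw [mul_zero, zero_mul],
    fun _ => ⟨0, by simp only [mul_zero, zero_mul, and_self]⟩⟩

theorem MemJacobson.mul_left {x : S} (hx : MemJacobson x) (c : S) : MemJacobson (c * x) :=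
  fun y => by simpa only [mul_assoc] using hx (y * c)

theorem MemJacobson.not_isUnit [Nontrivial S] {x : S} (hx : MemJacobson x) : ¬IsUnit x := by
  rintro ⟨u, rfl⟩
  simpa only [Units.inv_mul, sub_self, isUnit_zero_iff, zero_ne_one] using hx ↑u⁻¹

theorem IsStronglyJClean.memJacobson_mul_self_sub {a : S} (ha : IsStronglyJClean a) :
    MemJacobson (a * a - a) := by
  obtain ⟨e, he, hae, hJ⟩ := ha
  have hfactor : (a + e - 1) * (a - e) = a * a - a := by
    simp only [add_sub_assoc, add_mul, sub_mul, mul_sub, one_mul, hae, he.eq]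
    abel
  simpa only [hfactor] using hJ.mul_left (a + e - 1)

theorem isUnit_of_isUnit_mul_self_sub {a : S} (ha : IsUnit (a * a - a)) : IsUnit a := by
  have hcomm : Commute a (a - 1) := (Commute.refl a).sub_right (Commute.one_right a)
  rw [← mul_sub_one] at ha
  exact (hcomm.isUnit_mul_iff.mp ha).1

theorem isStronglyRadClean_and_not_isStronglyJClean [Nontrivial S] {a : S}
    (ha : IsUnit (a * a - a)) : IsStronglyRadClean a ∧ ¬IsStronglyJClean a :=
  ⟨(isUnit_of_isUnit_mul_self_sub ha).isStronglyRadClean,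
    fun hJ => hJ.memJacobson_mul_self_sub.not_isUnit ha⟩

end

theorem stmt9 {R : Type*} [CommRing R] [IsLocalRing R] :
    IsStronglyRadClean (!![1, 1; 1, 0] : Matrix (Fin 2) (Fin 2) R) ∧
    ¬ IsStronglyJClean (!![1, 1; 1, 0] : Matrix (Fin 2) (Fin 2) R) := by
  have hA : (!![1, 1; 1, 0] : Matrix (Fin 2) (Fin 2) R) * !![1, 1; 1, 0]
      - !![1, 1; 1, 0] = 1 := by
    ext i j
    fin_cases i <;> fin_cases j <;> norm_num [Matrix.mul_apply, Fin.sum_univ_two]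
  exact isStronglyRadClean_and_not_isStronglyJClean (hA ▸ isUnit_one)
end

section
/- The matrix A = [[1,1],[1,1]] over the 2-adic integers is not strongly rad-clean. -/
/-!
An idempotent `e` commuting with `A = !![1, 1; 1, 1]` has the shape `!![a, b; b, a]`, and
idempotency gives `(1 - 2a) b = 0` and `a² + b² = a`. Over a local ring in which `2` is not a
unit, `1 - 2a` is a unit, so `b = 0` and `a` is an idempotent scalar, hence `e = 0` or `e = 1`.
Neither works: `A - 0 = A` has determinant `0`, and `e = 1` would put `A` in the Jacobson radical,
whereas `1 - !![1, 0; 0, 0] * A` has determinant `0`.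
-/

namespace IsLocalRing

theorem eq_zero_or_one_of_isIdempotentElem {R : Type*} [Ring R] [IsLocalRing R] {e : R}
    (he : IsIdempotentElem e) : e = 0 ∨ e = 1 := by
  rcases isUnit_or_isUnit_of_add_one (add_sub_cancel e 1) with h | h
  · exact Or.inr (sub_eq_zero.mp (h.mul_right_eq_zero.mp he.mul_one_sub_self)).symm
  · exact Or.inl (h.mul_left_eq_zero.mp he.mul_one_sub_self)

theorem isUnit_one_sub_two_mul {R : Type*} [CommRing R] [IsLocalRing R]
    (h2 : ¬IsUnit (2 : R)) (a : R) : IsUnit (1 - 2 * a) :=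
  isUnit_one_sub_self_of_mem_nonunits _ fun h => h2 (isUnit_of_mul_isUnit_left h)

end IsLocalRing

theorem MemCornerJacobson.isUnit_one_sub_mul {S : Type*} [Ring S] {j : S}
    (hj : MemCornerJacobson 1 j) (y : S) : IsUnit (1 - y * j) := by
  obtain ⟨s, -, hs, hs'⟩ := hj y
  simp only [one_mul, mul_one] at hs hs'
  exact ⟨⟨_, s, hs', hs⟩, rfl⟩

namespace Matrix

variable {R : Type*} [CommRing R]

theorem eq_of_commute_allOnes_fin_two {e : Matrix (Fin 2) (Fin 2) R}
    (hc : !![1, 1; 1, 1] * e = e * !![1, 1; 1, 1]) : e = !![e 0 0, e 0 1; e 0 1, e 0 0] := by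
  have h00 := congrFun₂ hc 0 0
  have h01 := congrFun₂ hc 0 1
  simp only [mul_apply, Fin.sum_univ_two, of_apply, cons_val', cons_val_zero, cons_val_one,
    empty_val', cons_val_fin_one, one_mul, mul_one] at h00 h01
  have h10 : e 1 0 = e 0 1 := add_left_cancel h00
  have h11 : e 1 1 = e 0 0 := add_left_cancel (h01.trans (add_comm _ _))
  conv_lhs => rw [eta_fin_two e]
  rw [h10, h11]

theorem eq_zero_or_one_of_isIdempotentElem_of_commute_allOnes_fin_two [IsLocalRing R]
    (h2 : ¬IsUnit (2 : R)) {e : Matrix (Fin 2) (Fin 2) R} (he : IsIdempotentElem e)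
    (hc : !![1, 1; 1, 1] * e = e * !![1, 1; 1, 1]) : e = 0 ∨ e = 1 := by
  rw [eq_of_commute_allOnes_fin_two hc] at he ⊢
  generalize e 0 0 = a, e 0 1 = b at he ⊢
  have h00 := congrFun₂ he.eq 0 0
  have h01 := congrFun₂ he.eq 0 1
  simp only [mul_apply, Fin.sum_univ_two, of_apply, cons_val', cons_val_zero, cons_val_one,
    cons_val_fin_one] at h00 h01
  have hb : b = 0 :=
    (IsLocalRing.isUnit_one_sub_two_mul h2 a).mul_right_eq_zero.mp (by linear_combination -h01)
  have ha : a * a = a := by simpa [hb] using h00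
  rcases IsLocalRing.eq_zero_or_one_of_isIdempotentElem ha with rfl | rfl
  · left
    rw [hb]
    exact (eta_fin_two 0).symm
  · right
    rw [hb, one_fin_two]

theorem not_isUnit_allOnes_fin_two [Nontrivial R] :
    ¬IsUnit (!![1, 1; 1, 1] : Matrix (Fin 2) (Fin 2) R) := by
  simp [isUnit_iff_isUnit_det, det_fin_two_of]

theorem not_memCornerJacobson_one_allOnes_fin_two [Nontrivial R] :
    ¬MemCornerJacobson 1 (!![1, 1; 1, 1] : Matrix (Fin 2) (Fin 2) R) := fun hj => by
  have hu := hj.isUnit_one_sub_mul !![1, 0; 0, 0]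
  rw [one_fin_two] at hu
  simp [isUnit_iff_isUnit_det, det_fin_two_of] at hu

theorem not_isStronglyRadClean_allOnes_fin_two [IsLocalRing R] (h2 : ¬IsUnit (2 : R)) :
    ¬IsStronglyRadClean (!![1, 1; 1, 1] : Matrix (Fin 2) (Fin 2) R) := by
  rintro ⟨e, he, hu, hc, hj⟩
  rcases eq_zero_or_one_of_isIdempotentElem_of_commute_allOnes_fin_two h2 he hc with rfl | rfl
  · exact not_isUnit_allOnes_fin_two (by simpa using hu)
  · simp only [one_mul, mul_one] at hj
    exact not_memCornerJacobson_one_allOnes_fin_two hj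

end Matrix

theorem stmt15 :
    ¬ IsStronglyRadClean (!![1, 1; 1, 1] : Matrix (Fin 2) (Fin 2) ℤ_[2]) :=
  Matrix.not_isStronglyRadClean_allOnes_fin_two <| by
    simpa using (PadicInt.prime_p (p := 2)).not_isUnit
end
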